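/- Let k ≥ 1 be an integer, j ≥ 0 an integer, and s a real number with 0 < s < k. Then the j-th iterated derivative at s of the function x ↦ Γ'(x)/Γ(x) − Γ'(k−x)/Γ(k−x) equals j! · Σ_{r=0}^{∞} ( (−1)^{j+1}/(s+r)^{j+1} + 1/(r+k−s)^{j+1} ). -/

import Mathlib

/-!
The case `j = 0` is the derivative of `log Γ(x) + log Γ(K - x)`, obtained by differentiating the
Bohr–Mollerup approximants `logGammaSeq` termwise: their `log n` parts cancel, and the remaining
partial sums converge locally uniformly on `(0, K)`. Every further derivative is again taken
termwise, which turns `j!` into `(j + 1)!`.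
-/

open Real Filter Finset Set Topology

noncomputable def polygammaDiffTerm (K : ℝ) (j : ℕ) (x : ℝ) (r : ℕ) : ℝ :=
  (-1) ^ (j + 1) / (x + r) ^ (j + 1) + 1 / ((r : ℝ) + K - x) ^ (j + 1)

lemma summable_one_div_add_nat_pow (c : ℝ) {p : ℕ} (hp : 2 ≤ p) :
    Summable fun r : ℕ => 1 / (c + r) ^ p := by
  refine Summable.of_norm ?_
  have h := (Real.summable_one_div_nat_add_rpow c p).mpr (by exact_mod_cast hp)
  simpa [add_comm c, Real.rpow_natCast] using h

section

variable {K : ℝ}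

lemma norm_polygammaDiffTerm_zero_le {c y : ℝ} (hc : 0 < c) (hcy : c ≤ y) (hcK : c ≤ K - y)
    (r : ℕ) : ‖polygammaDiffTerm K 0 y r‖ ≤ K * (1 / (c + r) ^ 2) := by
  have hr : (0 : ℝ) ≤ r := r.cast_nonneg
  have hid : polygammaDiffTerm K 0 y r = (2 * y - K) / ((y + r) * (r + K - y)) := by
    have : y + r ≠ 0 := by linarith
    have : r + K - y ≠ 0 := by linarith
    simp only [polygammaDiffTerm]
    field_simp
    ring
  rw [hid, norm_div, Real.norm_eq_abs, Real.norm_of_nonneg (by nlinarith), mul_one_div]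
  refine div_le_div₀ (by linarith) (abs_le.mpr ⟨by linarith, by linarith⟩) (by positivity) ?_
  rw [sq]
  gcongr <;> linarith

lemma norm_polygammaDiffTerm_le {a b y : ℝ} (hay : a ≤ y) (hyb : y ≤ b) (ha : 0 < a) (hbK : b < K)
    (j r : ℕ) :
    ‖polygammaDiffTerm K j y r‖ ≤ 1 / (a + r) ^ (j + 1) + 1 / (K - b + r) ^ (j + 1) := by
  have hr : (0 : ℝ) ≤ r := r.cast_nonneg
  calc ‖polygammaDiffTerm K j y r‖
      ≤ 1 / (y + r) ^ (j + 1) + 1 / (r + K - y) ^ (j + 1) := by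
        refine (norm_add_le _ _).trans_eq ?_
        rw [norm_div, norm_div, norm_pow, norm_neg, norm_one, one_pow,
          Real.norm_of_nonneg (pow_nonneg (by linarith) _),
          Real.norm_of_nonneg (pow_nonneg (by linarith) _)]
    _ ≤ 1 / (a + r) ^ (j + 1) + 1 / (K - b + r) ^ (j + 1) := by
        gcongr
        linarith

/-- For `j = 0` the two halves of the term are not separately summable; the bound uses the
cancellation between them. -/
lemma exists_summable_bound_polygammaDiffTerm {a b : ℝ} (ha : 0 < a) (hbK : b < K) (j : ℕ) :
    ∃ u : ℕ → ℝ, Summable u ∧ ∀ r, ∀ y ∈ Icc a b, ‖polygammaDiffTerm K j y r‖ ≤ u r := by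
  rcases j with _ | j
  · have hc : 0 < min a (K - b) := lt_min ha (sub_pos.2 hbK)
    refine ⟨_, (summable_one_div_add_nat_pow (min a (K - b)) le_rfl).mul_left K, fun r y hy => ?_⟩
    exact norm_polygammaDiffTerm_zero_le hc ((min_le_left _ _).trans hy.1)
      ((min_le_right _ _).trans (by linarith [hy.2])) r
  · exact ⟨_, (summable_one_div_add_nat_pow _ (by omega)).add
      (summable_one_div_add_nat_pow _ (by omega)),
      fun r y hy => norm_polygammaDiffTerm_le hy.1 hy.2 ha hbK (j + 1) r⟩

lemma summable_polygammaDiffTerm {x : ℝ} (hx : 0 < x) (hxK : x < K) (j : ℕ) :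
    Summable (polygammaDiffTerm K j x) := by
  obtain ⟨u, hu, hbound⟩ := exists_summable_bound_polygammaDiffTerm hx hxK j
  exact Summable.of_norm_bounded hu fun r => hbound r x (left_mem_Icc.2 le_rfl)

lemma hasDerivAt_polygammaDiffTerm (j r : ℕ) {x : ℝ} (hx : x + r ≠ 0)
    (hxK : (r : ℝ) + K - x ≠ 0) :
    HasDerivAt (fun y => polygammaDiffTerm K j y r)
      ((j + 1) * polygammaDiffTerm K (j + 1) x r) x := by
  have h₁ := (((hasDerivAt_id' x).add_const (r : ℝ)).fun_pow (j + 1)).fun_inv (pow_ne_zero _ hx)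
  have h₂ := ((((hasDerivAt_id' x).const_sub ((r : ℝ) + K))).fun_pow (j + 1)).fun_inv
    (pow_ne_zero _ hxK)
  have h := (h₁.const_mul ((-1 : ℝ) ^ (j + 1))).fun_add h₂
  simp only [← one_div, mul_one_div] at h
  refine h.congr_deriv ?_
  simp only [polygammaDiffTerm, Nat.add_sub_cancel, Nat.cast_add, Nat.cast_one]
  field_simp
  ring

lemma hasDerivAt_tsum_polygammaDiffTerm {x : ℝ} (hx : 0 < x) (hxK : x < K) (j : ℕ) :
    HasDerivAt (fun y => ∑' r, polygammaDiffTerm K j y r)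
      ((j + 1) * ∑' r, polygammaDiffTerm K (j + 1) x r) x := by
  have ha : 0 < x / 2 := by linarith
  have hbK : (x + K) / 2 < K := by linarith
  obtain ⟨u, hu, hbound⟩ := exists_summable_bound_polygammaDiffTerm ha hbK (j + 1)
  have hunif : TendstoUniformlyOn
      (fun n y => ∑ r ∈ range n, (j + 1) * polygammaDiffTerm K (j + 1) y r)
      (fun y => ∑' r, (j + 1) * polygammaDiffTerm K (j + 1) y r) atTop
      (Ioo (x / 2) ((x + K) / 2)) := by
    refine tendstoUniformlyOn_tsum_nat (hu.mul_left ((j : ℝ) + 1)) fun r y hy => ?_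
    rw [norm_mul, Real.norm_of_nonneg (by positivity)]
    exact mul_le_mul_of_nonneg_left (hbound r y (Ioo_subset_Icc_self hy)) (by positivity)
  rw [← tsum_mul_left]
  refine hasDerivAt_of_tendstoUniformlyOn isOpen_Ioo hunif ?_ ?_ ⟨by linarith, by linarith⟩
    (f := fun n y => ∑ r ∈ range n, polygammaDiffTerm K j y r)
  · filter_upwards with n y ⟨hay, hyb⟩
    exact HasDerivAt.fun_sum fun r _ =>
      hasDerivAt_polygammaDiffTerm j r (add_pos_of_pos_of_nonneg (ha.trans hay) r.cast_nonneg).ne'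
        (by linarith [r.cast_nonneg (α := ℝ)] : (0 : ℝ) < r + K - y).ne'
  · intro y ⟨hay, hyb⟩
    exact (summable_polygammaDiffTerm (ha.trans hay) (hyb.trans hbK) j).hasSum.tendsto_sum_nat

lemma hasDerivAt_logGammaSeq (n : ℕ) {x : ℝ} (hx : 0 < x) :
    HasDerivAt (fun y => BohrMollerup.logGammaSeq y n)
      (log n - ∑ m ∈ range (n + 1), 1 / (x + m)) x := by
  have hlin := ((hasDerivAt_id' x).mul_const (log n)).add_const (log n.factorial : ℝ)
  have hlog := HasDerivAt.fun_sum (u := range (n + 1)) fun m _ =>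
    ((hasDerivAt_id' x).add_const (m : ℝ)).log (by positivity)
  simpa only [BohrMollerup.logGammaSeq, one_mul, one_div] using hlin.fun_sub hlog

lemma hasDerivAt_logGammaSeq_add_logGammaSeq_sub (n : ℕ) {x : ℝ} (hx : 0 < x) (hxK : x < K) :
    HasDerivAt (fun y => BohrMollerup.logGammaSeq y n + BohrMollerup.logGammaSeq (K - y) n)
      (∑ m ∈ range (n + 1), polygammaDiffTerm K 0 x m) x := by
  have h := (hasDerivAt_logGammaSeq n hx).fun_add
    ((hasDerivAt_logGammaSeq n (sub_pos.2 hxK)).comp x ((hasDerivAt_id' x).const_sub K))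
  refine h.congr_deriv ?_
  have hshift (m : ℕ) : (m : ℝ) + K - x = K - x + m := by ring
  simp only [polygammaDiffTerm, sum_add_distrib, zero_add, pow_one, neg_div, sum_neg_distrib,
    hshift]
  ring

lemma hasDerivAt_log_Gamma_add_log_Gamma_sub {x : ℝ} (hx : 0 < x) (hxK : x < K) :
    HasDerivAt (fun y => log (Gamma y) + log (Gamma (K - y)))
      (∑' r, polygammaDiffTerm K 0 x r) x := by
  have ha : 0 < x / 2 := by linarith
  have hbK : (x + K) / 2 < K := by linarith
  obtain ⟨u, hu, hbound⟩ := exists_summable_bound_polygammaDiffTerm ha hbK 0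
  have hunif := (tendstoUniformlyOn_tsum_nat hu fun r y hy => hbound r y hy).mono
    Ioo_subset_Icc_self
  refine hasDerivAt_of_tendstoUniformlyOn isOpen_Ioo
    (hunif.seq_tendstoUniformlyOn (· + 1) (tendsto_add_atTop_nat 1)) ?_ ?_
    (show x ∈ Ioo (x / 2) ((x + K) / 2) from ⟨by linarith, by linarith⟩)
    (f := fun n y => BohrMollerup.logGammaSeq y n + BohrMollerup.logGammaSeq (K - y) n)
  · filter_upwards with n y ⟨hay, hyb⟩
    exact hasDerivAt_logGammaSeq_add_logGammaSeq_sub n (ha.trans hay) (hyb.trans hbK)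
  · intro y ⟨hay, hyb⟩
    exact (BohrMollerup.tendsto_log_gamma (ha.trans hay)).add
      (BohrMollerup.tendsto_log_gamma (sub_pos.2 (hyb.trans hbK)))

lemma hasDerivAt_log_Gamma {x : ℝ} (hx : 0 < x) :
    HasDerivAt (fun y => log (Gamma y)) (deriv Gamma x / Gamma x) x :=
  ((differentiableAt_Gamma fun m => by linarith [m.cast_nonneg (α := ℝ)]).hasDerivAt.log
    (Gamma_pos_of_pos hx).ne')

lemma logDeriv_Gamma_sub_logDeriv_Gamma_eq_tsum {x : ℝ} (hx : 0 < x) (hxK : x < K) :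
    deriv Gamma x / Gamma x - deriv Gamma (K - x) / Gamma (K - x) =
      ∑' r, polygammaDiffTerm K 0 x r := by
  have h := (hasDerivAt_log_Gamma hx).fun_add
    ((hasDerivAt_log_Gamma (sub_pos.2 hxK)).comp x ((hasDerivAt_id' x).const_sub K))
  rw [← h.unique (hasDerivAt_log_Gamma_add_log_Gamma_sub hx hxK)]
  ring

end

theorem iteratedDeriv_digamma_diff_eq_tsum_general
    (k : ℕ) (j : ℕ) (s : ℝ) (hs0 : 0 < s) (hsk : s < (k : ℝ)) :
    iteratedDeriv j
      (fun x : ℝ => deriv Real.Gamma x / Real.Gamma x -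
        deriv Real.Gamma ((k : ℝ) - x) / Real.Gamma ((k : ℝ) - x)) s =
    (Nat.factorial j : ℝ) * ∑' r : ℕ,
      ((-1 : ℝ) ^ (j + 1) / (s + r) ^ (j + 1) + 1 / ((r : ℝ) + k - s) ^ (j + 1)) := by
  induction j generalizing s with
  | zero =>
    rw [iteratedDeriv_zero, Nat.factorial_zero, Nat.cast_one, one_mul]
    exact logDeriv_Gamma_sub_logDeriv_Gamma_eq_tsum hs0 hsk
  | succ j ih =>
    have hlocal : iteratedDeriv j
        (fun x : ℝ => deriv Gamma x / Gamma x - deriv Gamma ((k : ℝ) - x) / Gamma ((k : ℝ) - x))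
        =ᶠ[𝓝 s] fun y => (j.factorial : ℝ) * ∑' r, polygammaDiffTerm k j y r := by
      filter_upwards [Ioo_mem_nhds hs0 hsk] with y hy using ih y hy.1 hy.2
    change _ = ((j + 1).factorial : ℝ) * ∑' r, polygammaDiffTerm k (j + 1) s r
    rw [iteratedDeriv_succ, hlocal.deriv_eq,
      ((hasDerivAt_tsum_polygammaDiffTerm hs0 hsk j).const_mul _).deriv, Nat.factorial_succ]
    push_cast
    ring

/-- Series expansion of the iterated derivatives of the digamma difference
(Equation (5.15.1) of [NIST] applied to `Ψ_{j+1}`): for `0 < s < k`,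
`(d/ds)^j (Γ'(s)/Γ(s) − Γ'(k−s)/Γ(k−s)) = j! Σ_{r≥0} ((−1)^{j+1}/(s+r)^{j+1} + 1/(r+k−s)^{j+1})`. -/
theorem iteratedDeriv_digamma_diff_eq_tsum
    (k : ℕ) (hk : 1 ≤ k) (j : ℕ) (s : ℝ) (hs0 : 0 < s) (hsk : s < (k : ℝ)) :
    iteratedDeriv j
      (fun x : ℝ => deriv Real.Gamma x / Real.Gamma x -
        deriv Real.Gamma ((k : ℝ) - x) / Real.Gamma ((k : ℝ) - x)) s =
    (Nat.factorial j : ℝ) * ∑' r : ℕ,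
      ((-1 : ℝ) ^ (j + 1) / (s + r) ^ (j + 1) + 1 / ((r : ℝ) + k - s) ^ (j + 1)) :=
  iteratedDeriv_digamma_diff_eq_tsum_general k j s hs0 hsk
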